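/- Let E be a real inner product space of dimension n ≥ 4 and let R be an algebraic curvature tensor on E with nonnegative isotropic curvature. Then for every pair of orthonormal vectors e₁, e₂ in E one has Ric(e₁,e₁) + Ric(e₂,e₂) ≥ 2 R(e₁,e₂,e₁,e₂), where Ric denotes the Ricci curvature of R. -/

import Mathlib

open scoped RealInnerProductSpace

/-!
Complete `e₁, e₂` to an orthonormal basis `e₁, e₂, e₃, …` (the trace defining `Ric` does not
depend on the basis). Then `Ric(e₁,e₁) + Ric(e₂,e₂) - 2 R(e₁,e₂,e₁,e₂) = ∑_{k ≥ 3} a_k` with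
`a_k = R(e₁,e_k,e₁,e_k) + R(e₂,e_k,e₂,e_k)`. Adding the isotropic curvature inequalities for the
frames `(e₁, e₂, e_k, e_l)` and `(e₁, -e₂, e_k, e_l)` cancels the mixed term and gives
`a_k + a_l ≥ 0` for `k ≠ l`; as there are at least two indices `k ≥ 3`, the sum is nonnegative.
-/

theorem Finset.sum_nonneg_of_pairwise_add_nonneg {ι M : Type*} [AddCommGroup M] [LinearOrder M]
    [IsOrderedAddMonoid M] {s : Finset ι} {f : ι → M} (hs : 1 < s.card)
    (h : ∀ i ∈ s, ∀ j ∈ s, i ≠ j → 0 ≤ f i + f j) : 0 ≤ ∑ i ∈ s, f i := by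
  classical
  by_cases hnonneg : ∀ i ∈ s, 0 ≤ f i
  · exact Finset.sum_nonneg hnonneg
  push Not at hnonneg
  obtain ⟨m, hm, hfm⟩ := hnonneg
  obtain ⟨j, hj, hjm⟩ := Finset.exists_mem_ne hs m
  have hrest : ∀ k ∈ s.erase m, 0 ≤ f k := fun k hk =>
    (h k (mem_of_mem_erase hk) m hm (ne_of_mem_erase hk)).trans (add_le_of_nonpos_right hfm.le)
  calc 0 ≤ f m + f j := by rw [add_comm]; exact h j hj m hm hjm
    _ ≤ f m + ∑ k ∈ s.erase m, f k := by
      gcongr; exact Finset.single_le_sum hrest (mem_erase.mpr ⟨hjm, hj⟩)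
    _ = ∑ i ∈ s, f i := Finset.add_sum_erase s f hm

theorem OrthonormalBasis.sum_apply_self_eq {E ι κ : Type*} [NormedAddCommGroup E]
    [InnerProductSpace ℝ E] [Fintype ι] [Fintype κ] (f : E →ₗ[ℝ] E →ₗ[ℝ] ℝ)
    (b : OrthonormalBasis ι ℝ E) (c : OrthonormalBasis κ ℝ E) :
    ∑ i, f (b i) (b i) = ∑ k, f (c k) (c k) := by
  calc ∑ i, f (b i) (b i) = ∑ i, ∑ k, ⟪c k, b i⟫ * f (b i) (c k) := by
        refine Finset.sum_congr rfl fun i _ => ?_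
        nth_rw 2 [← c.sum_repr' (b i)]
        simp [map_sum, map_smul]
    _ = ∑ k, f (∑ i, ⟪b i, c k⟫ • b i) (c k) := by
        rw [Finset.sum_comm]
        simp [map_sum, map_smul, real_inner_comm]
    _ = ∑ k, f (c k) (c k) := by simp_rw [b.sum_repr']

section Curvature

variable {E : Type*} [NormedAddCommGroup E] [InnerProductSpace ℝ E]

def NonnegIsotropicCurvature (R : E →ₗ[ℝ] E →ₗ[ℝ] E →ₗ[ℝ] E →ₗ[ℝ] ℝ) : Prop :=
  ∀ e : Fin 4 → E, Orthonormal ℝ e →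
      R (e 0) (e 2) (e 0) (e 2) + R (e 0) (e 3) (e 0) (e 3) +
        R (e 1) (e 2) (e 1) (e 2) + R (e 1) (e 3) (e 1) (e 3) -
        2 * R (e 0) (e 1) (e 2) (e 3) ≥ 0

variable {R : E →ₗ[ℝ] E →ₗ[ℝ] E →ₗ[ℝ] E →ₗ[ℝ] ℝ}

theorem NonnegIsotropicCurvature.sum_sectional_nonneg (hR : NonnegIsotropicCurvature R)
    {e : Fin 4 → E} (he : Orthonormal ℝ e) :
    0 ≤ R (e 0) (e 2) (e 0) (e 2) + R (e 0) (e 3) (e 0) (e 3) +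
      R (e 1) (e 2) (e 1) (e 2) + R (e 1) (e 3) (e 1) (e 3) := by
  -- Replacing `e 1` by `-e 1` flips the sign of the mixed term only. It is written as a scalar
  -- multiple since instance search does not find the `AddCommGroup` structure `map_neg` needs here.
  have he' : Orthonormal ℝ ![e 0, (-1 : ℝ) • e 1, e 2, e 3] :=
    he.orthonormal_of_forall_eq_or_eq_neg fun i => by fin_cases i <;> simp
  have h := hR e he
  have h' := hR _ he'
  simp only [Matrix.cons_val, map_smul, LinearMap.smul_apply, smul_eq_mul] at h'
  linarith

theorem NonnegIsotropicCurvature.two_mul_le_sum (hR : NonnegIsotropicCurvature R)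
    (hanti₁ : ∀ x y z w, R x y z w = - R y x z w) (hanti₂ : ∀ x y z w, R x y z w = - R x y w z)
    {u : Finset E} (hu : Orthonormal ℝ ((↑) : u → E)) (hcard : 4 ≤ u.card)
    {e₁ e₂ : E} (h₁ : e₁ ∈ u) (h₂ : e₂ ∈ u) (hne : e₁ ≠ e₂) :
    2 * R e₁ e₂ e₁ e₂ ≤ ∑ x ∈ u, (R e₁ x e₁ x + R e₂ x e₂ x) := by
  classical
  set rest := (u.erase e₁).erase e₂
  have h₂' : e₂ ∈ u.erase e₁ := Finset.mem_erase.2 ⟨hne.symm, h₂⟩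
  have hrest : 0 ≤ ∑ x ∈ rest, (R e₁ x e₁ x + R e₂ x e₂ x) := by
    refine Finset.sum_nonneg_of_pairwise_add_nonneg ?_ fun x hx y hy hxy => ?_
    · rw [Finset.card_erase_of_mem h₂', Finset.card_erase_of_mem h₁]
      omega
    simp only [rest, Finset.mem_erase] at hx hy
    let f : Fin 4 → u := ![⟨e₁, h₁⟩, ⟨e₂, h₂⟩, ⟨x, hx.2.2⟩, ⟨y, hy.2.2⟩]
    have hf : Function.Injective f := by
      intro i j hij
      fin_cases i <;> fin_cases j <;> simp [f] at hij ⊢ <;> grind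
    have hframe : Orthonormal ℝ ![e₁, e₂, x, y] := by
      convert hu.comp f hf using 1
      ext i; fin_cases i <;> rfl
    have := hR.sum_sectional_nonneg hframe
    simp only [Matrix.cons_val] at this
    linarith
  have hdiag : ∀ x z w, R x x z w = 0 := fun x z w => by
    linarith [hanti₁ x x z w]
  have hswap : R e₂ e₁ e₂ e₁ = R e₁ e₂ e₁ e₂ := by rw [hanti₁, hanti₂, neg_neg]
  rw [← Finset.add_sum_erase u _ h₁, ← Finset.add_sum_erase _ _ h₂', hdiag, hdiag, hswap]
  linarith

end Curvature

theorem stmt1 {E : Type*} [NormedAddCommGroup E] [InnerProductSpace ℝ E]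
    [FiniteDimensional ℝ E] {n : ℕ} (hn : Module.finrank ℝ E = n) (hdim : 4 ≤ n)
    (R : E →ₗ[ℝ] E →ₗ[ℝ] E →ₗ[ℝ] E →ₗ[ℝ] ℝ)
    (hanti₁ : ∀ x y z w, R x y z w = - R y x z w)
    (hanti₂ : ∀ x y z w, R x y z w = - R x y w z)
    (hNNIC : ∀ e : Fin 4 → E, Orthonormal ℝ e →
      R (e 0) (e 2) (e 0) (e 2) + R (e 0) (e 3) (e 0) (e 3) +
        R (e 1) (e 2) (e 1) (e 2) + R (e 1) (e 3) (e 1) (e 3) -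
        2 * R (e 0) (e 1) (e 2) (e 3) ≥ 0)
    (b : OrthonormalBasis (Fin n) ℝ E)
    (Ric : E → E → ℝ)
    (hRic : ∀ x y, Ric x y = ∑ i, R x (b i) y (b i)) :
    ∀ e₁ e₂ : E, Orthonormal ℝ ![e₁, e₂] →
      Ric e₁ e₁ + Ric e₂ e₂ ≥ 2 * R e₁ e₂ e₁ e₂ := by
  intro e₁ e₂ he
  obtain ⟨u, c, hsub, hc⟩ := he.toSubtypeRange.exists_orthonormalBasis_extension
  have hRic_u : ∀ x, Ric x x = ∑ y ∈ u, R x y x y := fun x => by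
    rw [hRic, ← Finset.sum_coe_sort u]
    simpa [hc] using OrthonormalBasis.sum_apply_self_eq ((R x).flip x) b c
  have hcard : 4 ≤ u.card := by
    rwa [← Fintype.card_coe, ← Module.finrank_eq_card_basis c.toBasis, hn]
  have hne : e₁ ≠ e₂ := he.linearIndependent.injective.ne (by decide : (0 : Fin 2) ≠ 1)
  rw [ge_iff_le, hRic_u, hRic_u, ← Finset.sum_add_distrib]
  exact NonnegIsotropicCurvature.two_mul_le_sum hNNIC hanti₁ hanti₂ (hc ▸ c.orthonormal) hcard
    (hsub ⟨0, rfl⟩) (hsub ⟨1, rfl⟩) hne
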